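/- Let (p,q) ∈ ℤ^n × ℕ with gcd(p,q) = 1, let r = gcd(p), and let γ_p ∈ SL_n(ℤ) be such that p = r·e_n·γ_p. Then the stabilizer of the affine lattice ℤ^n + p/q under the action g·Λ = Λ·g^{−1} of SL_n(ℝ) is exactly γ_p^{−1}·Γ₁ⁿ(q)·γ_p; that is, for g ∈ SL_n(ℝ) one has (ℤ^n + p/q)·g = ℤ^n + p/q if and only if γ_p·g·γ_p^{−1} ∈ Γ₁ⁿ(q). Consequently the map g ↦ (ℤ^n + p/q)·g induces an identification of Y_{p/q} = {(ℤ^n + p/q)·g : g ∈ SL_n(ℝ)} with the homogeneous space γ_p^{−1}Γ₁ⁿ(q)γ_p\SL_n(ℝ). -/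

import Mathlib

open MeasureTheory Matrix Filter
open scoped ENNReal

noncomputable section

abbrev SLR (n : ℕ) := Matrix.SpecialLinearGroup (Fin n) ℝ
abbrev SLZ (n : ℕ) := Matrix.SpecialLinearGroup (Fin n) ℤ

instance SLRTop (n : ℕ) : TopologicalSpace (SLR n) :=
  inferInstanceAs (TopologicalSpace {A : Matrix (Fin n) (Fin n) ℝ // A.det = 1})

def ιR (n : ℕ) : SLZ n →* SLR n := Matrix.SpecialLinearGroup.map (Int.castRingHom ℝ)

def SLZsub (n : ℕ) : Subgroup (SLR n) := (ιR n).range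

def en (n : ℕ) : Fin n → ℤ := fun i => if (i : ℕ) = n - 1 then 1 else 0
def enR (n : ℕ) : Fin n → ℝ := fun i => if (i : ℕ) = n - 1 then 1 else 0
def enM (n q : ℕ) : Fin n → ZMod q := fun i => if (i : ℕ) = n - 1 then 1 else 0

def ιM (n q : ℕ) : SLZ n →* Matrix.SpecialLinearGroup (Fin n) (ZMod q) :=
  Matrix.SpecialLinearGroup.map (Int.castRingHom (ZMod q))

def Gamma1 (n q : ℕ) : Subgroup (SLZ n) where
  carrier := {γ | Matrix.vecMul (enM n q) ((ιM n q γ : Matrix.SpecialLinearGroup (Fin n) (ZMod q)) : Matrix (Fin n) (Fin n) (ZMod q)) = enM n q}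
  one_mem' := by simp
  mul_mem' := by
    intro a b ha hb
    have ha' : Matrix.vecMul (enM n q) ((ιM n q a : Matrix.SpecialLinearGroup (Fin n) (ZMod q)) : Matrix (Fin n) (Fin n) (ZMod q)) = enM n q := ha
    have hb' : Matrix.vecMul (enM n q) ((ιM n q b : Matrix.SpecialLinearGroup (Fin n) (ZMod q)) : Matrix (Fin n) (Fin n) (ZMod q)) = enM n q := hb
    show Matrix.vecMul (enM n q) ((ιM n q (a * b) : Matrix.SpecialLinearGroup (Fin n) (ZMod q)) : Matrix (Fin n) (Fin n) (ZMod q)) = enM n q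
    rw [_root_.map_mul, Matrix.SpecialLinearGroup.coe_mul, ← Matrix.vecMul_vecMul, ha', hb']
  inv_mem' := by
    intro a ha
    have ha' : Matrix.vecMul (enM n q) ((ιM n q a : Matrix.SpecialLinearGroup (Fin n) (ZMod q)) : Matrix (Fin n) (Fin n) (ZMod q)) = enM n q := ha
    show Matrix.vecMul (enM n q) ((ιM n q a⁻¹ : Matrix.SpecialLinearGroup (Fin n) (ZMod q)) : Matrix (Fin n) (Fin n) (ZMod q)) = enM n q
    rw [_root_.map_inv]
    have key : ((ιM n q a : Matrix.SpecialLinearGroup (Fin n) (ZMod q)) : Matrix (Fin n) (Fin n) (ZMod q)) *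
        (((ιM n q a)⁻¹ : Matrix.SpecialLinearGroup (Fin n) (ZMod q)) : Matrix (Fin n) (Fin n) (ZMod q)) = 1 := by
      rw [← Matrix.SpecialLinearGroup.coe_mul, mul_inv_cancel]
      simp
    calc Matrix.vecMul (enM n q) (((ιM n q a)⁻¹ : Matrix.SpecialLinearGroup (Fin n) (ZMod q)) : Matrix (Fin n) (Fin n) (ZMod q))
        = Matrix.vecMul (Matrix.vecMul (enM n q) ((ιM n q a : Matrix.SpecialLinearGroup (Fin n) (ZMod q)) : Matrix (Fin n) (Fin n) (ZMod q))) (((ιM n q a)⁻¹ : Matrix.SpecialLinearGroup (Fin n) (ZMod q)) : Matrix (Fin n) (Fin n) (ZMod q)) := by rw [ha']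
      _ = Matrix.vecMul (enM n q) (((ιM n q a : Matrix.SpecialLinearGroup (Fin n) (ZMod q)) : Matrix (Fin n) (Fin n) (ZMod q)) * (((ιM n q a)⁻¹ : Matrix.SpecialLinearGroup (Fin n) (ZMod q)) : Matrix (Fin n) (Fin n) (ZMod q))) := Matrix.vecMul_vecMul _ _ _
      _ = enM n q := by rw [key, Matrix.vecMul_one]

def LZ (n : ℕ) : Subgroup (SLZ n) where
  carrier := {γ | Matrix.vecMul (en n) ((γ : SLZ n) : Matrix (Fin n) (Fin n) ℤ) = en n}
  one_mem' := by simp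
  mul_mem' := by
    intro a b ha hb
    have ha' : Matrix.vecMul (en n) ((a : SLZ n) : Matrix (Fin n) (Fin n) ℤ) = en n := ha
    have hb' : Matrix.vecMul (en n) ((b : SLZ n) : Matrix (Fin n) (Fin n) ℤ) = en n := hb
    show Matrix.vecMul (en n) ((a * b : SLZ n) : Matrix (Fin n) (Fin n) ℤ) = en n
    rw [Matrix.SpecialLinearGroup.coe_mul, ← Matrix.vecMul_vecMul, ha', hb']
  inv_mem' := by
    intro a ha
    have ha' : Matrix.vecMul (en n) ((a : SLZ n) : Matrix (Fin n) (Fin n) ℤ) = en n := ha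
    show Matrix.vecMul (en n) ((a⁻¹ : SLZ n) : Matrix (Fin n) (Fin n) ℤ) = en n
    have key : ((a : Matrix (Fin n) (Fin n) ℤ)) * ((a⁻¹ : SLZ n) : Matrix (Fin n) (Fin n) ℤ) = 1 := by
      rw [← Matrix.SpecialLinearGroup.coe_mul, mul_inv_cancel]
      simp
    calc Matrix.vecMul (en n) ((a⁻¹ : SLZ n) : Matrix (Fin n) (Fin n) ℤ)
        = Matrix.vecMul (Matrix.vecMul (en n) (a : Matrix (Fin n) (Fin n) ℤ)) ((a⁻¹ : SLZ n) : Matrix (Fin n) (Fin n) ℤ) := by rw [ha']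
      _ = Matrix.vecMul (en n) ((a : Matrix (Fin n) (Fin n) ℤ) * ((a⁻¹ : SLZ n) : Matrix (Fin n) (Fin n) ℤ)) := Matrix.vecMul_vecMul _ _ _
      _ = en n := by rw [key, Matrix.vecMul_one]

/-- The map from the coset space `(Γ ∩ L_n)\Γ` to `ℤⁿ` induced by `γ ↦ e_n·γ`. -/
def cosetVec (n : ℕ) (Γ : Subgroup (SLZ n)) :
    Quotient (QuotientGroup.rightRel ((LZ n).subgroupOf Γ)) → (Fin n → ℤ) :=
  fun c => Quotient.liftOn c
    (fun γ => Matrix.vecMul (en n) (((γ : Γ) : SLZ n) : Matrix (Fin n) (Fin n) ℤ))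
    (by
      intro a b hab
      have hab' : (b * a⁻¹ : Γ) ∈ (LZ n).subgroupOf Γ := QuotientGroup.rightRel_apply.mp hab
      have h : Matrix.vecMul (en n) (((b * a⁻¹ : Γ) : SLZ n) : Matrix (Fin n) (Fin n) ℤ) = en n :=
        Subgroup.mem_subgroupOf.mp hab'
      show Matrix.vecMul (en n) (((a : Γ) : SLZ n) : Matrix (Fin n) (Fin n) ℤ)
          = Matrix.vecMul (en n) (((b : Γ) : SLZ n) : Matrix (Fin n) (Fin n) ℤ)
      have hb : (((b : Γ) : SLZ n) : Matrix (Fin n) (Fin n) ℤ)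
          = (((b * a⁻¹ : Γ) : SLZ n) : Matrix (Fin n) (Fin n) ℤ) * (((a : Γ) : SLZ n) : Matrix (Fin n) (Fin n) ℤ) := by
        rw [← Matrix.SpecialLinearGroup.coe_mul]
        congr 1
        simp only [Subgroup.coe_mul, InvMemClass.coe_inv]
        group
        all_goals first | rfl | simp
      rw [hb, ← Matrix.vecMul_vecMul, h])

/-- The incomplete Eisenstein series `Θ_f^Γ`: the sum of `f(e_n·γ·g)` over the
coset space `(Γ ∩ L_n)\Γ`. -/
def Theta (n : ℕ) (Γ : Subgroup (SLZ n)) (f : (Fin n → ℝ) → ℂ) (g : SLR n) : ℂ :=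
  ∑' c : Quotient (QuotientGroup.rightRel ((LZ n).subgroupOf Γ)),
    f (Matrix.vecMul (fun i => ((cosetVec n Γ c) i : ℝ)) (g : Matrix (Fin n) (Fin n) ℝ))
/-- The real stabilizer `L_n ≤ SL_n(ℝ)` of `e_n`. -/
def LR (n : ℕ) : Subgroup (SLR n) where
  carrier := {g | Matrix.vecMul (enR n) ((g : SLR n) : Matrix (Fin n) (Fin n) ℝ) = enR n}
  one_mem' := by simp
  mul_mem' := by
    intro a b ha hb
    have ha' : Matrix.vecMul (enR n) ((a : SLR n) : Matrix (Fin n) (Fin n) ℝ) = enR n := ha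
    have hb' : Matrix.vecMul (enR n) ((b : SLR n) : Matrix (Fin n) (Fin n) ℝ) = enR n := hb
    show Matrix.vecMul (enR n) ((a * b : SLR n) : Matrix (Fin n) (Fin n) ℝ) = enR n
    rw [Matrix.SpecialLinearGroup.coe_mul, ← Matrix.vecMul_vecMul, ha', hb']
  inv_mem' := by
    intro a ha
    have ha' : Matrix.vecMul (enR n) ((a : SLR n) : Matrix (Fin n) (Fin n) ℝ) = enR n := ha
    show Matrix.vecMul (enR n) ((a⁻¹ : SLR n) : Matrix (Fin n) (Fin n) ℝ) = enR n
    have key : ((a : Matrix (Fin n) (Fin n) ℝ)) * ((a⁻¹ : SLR n) : Matrix (Fin n) (Fin n) ℝ) = 1 := by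
      rw [← Matrix.SpecialLinearGroup.coe_mul, mul_inv_cancel]; simp
    calc Matrix.vecMul (enR n) ((a⁻¹ : SLR n) : Matrix (Fin n) (Fin n) ℝ)
        = Matrix.vecMul (Matrix.vecMul (enR n) (a : Matrix (Fin n) (Fin n) ℝ)) ((a⁻¹ : SLR n) : Matrix (Fin n) (Fin n) ℝ) := by rw [ha']
      _ = Matrix.vecMul (enR n) ((a : Matrix (Fin n) (Fin n) ℝ) * ((a⁻¹ : SLR n) : Matrix (Fin n) (Fin n) ℝ)) := Matrix.vecMul_vecMul _ _ _
      _ = enR n := by rw [key, Matrix.vecMul_one]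

/-- The identity component `P_n ≤ SL_n(ℝ)` of the maximal parabolic subgroup fixing the
line spanned by `e_n`: those `g` with `e_n·g = c·e_n` for some `c > 0`. -/
def PR (n : ℕ) : Subgroup (SLR n) where
  carrier := {g | ∃ c : ℝ, 0 < c ∧
    Matrix.vecMul (enR n) ((g : SLR n) : Matrix (Fin n) (Fin n) ℝ) = c • enR n}
  one_mem' := ⟨1, one_pos, by simp⟩
  mul_mem' := by
    rintro a b ⟨c, hc, hca⟩ ⟨d, hd, hdb⟩
    refine ⟨c * d, mul_pos hc hd, ?_⟩
    show Matrix.vecMul (enR n) ((a * b : SLR n) : Matrix (Fin n) (Fin n) ℝ) = (c * d) • enR n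
    rw [Matrix.SpecialLinearGroup.coe_mul, ← Matrix.vecMul_vecMul, hca,
      Matrix.smul_vecMul, hdb, smul_smul]
  inv_mem' := by
    rintro a ⟨c, hc, hca⟩
    refine ⟨c⁻¹, inv_pos.mpr hc, ?_⟩
    show Matrix.vecMul (enR n) ((a⁻¹ : SLR n) : Matrix (Fin n) (Fin n) ℝ) = c⁻¹ • enR n
    have key : ((a : Matrix (Fin n) (Fin n) ℝ)) * ((a⁻¹ : SLR n) : Matrix (Fin n) (Fin n) ℝ) = 1 := by
      rw [← Matrix.SpecialLinearGroup.coe_mul, mul_inv_cancel]; simp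
    have h2 : c • Matrix.vecMul (enR n) ((a⁻¹ : SLR n) : Matrix (Fin n) (Fin n) ℝ) = enR n := by
      rw [← Matrix.smul_vecMul, ← hca, Matrix.vecMul_vecMul, key, Matrix.vecMul_one]
    have h3 := congrArg (fun w => c⁻¹ • w) h2
    simpa [smul_smul, inv_mul_cancel₀ (ne_of_gt hc)] using h3
/-- The Euclidean norm on `ℝⁿ`. -/
def eNorm (n : ℕ) (v : Fin n → ℝ) : ℝ := Real.sqrt (∑ i : Fin n, (v i) ^ 2)

/-- The standard quadratic form `Q₀` of signature `(p₁, n − p₁)`. -/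
def Q0 (n p₁ : ℕ) (v : Fin n → ℝ) : ℝ := ∑ i : Fin n, if (i : ℕ) < p₁ then (v i) ^ 2 else -((v i) ^ 2)

/-- The Riemann zeta value `ζ(n) = Σ_{k ≥ 1} k⁻ⁿ`. -/
def zetaN (n : ℕ) : ℝ := ∑' k : {k : ℕ // 0 < k}, ((k.1 : ℝ))⁻¹ ^ n

/-- `ζ_q(n) = Σ_{k ≥ 1, gcd(k,q) = 1} k⁻ⁿ`. -/
def zetaCop (q n : ℕ) : ℝ := ∑' k : {k : ℕ // 0 < k ∧ Nat.Coprime k q}, ((k.1 : ℝ))⁻¹ ^ n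

/-- The Siegel transform `f̂(Λ) = Σ_{v ∈ Λ∖{0}} f(v)`. -/
def Siegel (n : ℕ) (f : (Fin n → ℝ) → ℂ) (Λ : Set (Fin n → ℝ)) : ℂ :=
  ∑' v : {x : Fin n → ℝ // x ∈ Λ ∧ x ≠ 0}, f v

/-- The affine lattice `(ℤⁿ + α)·g` (row vector action). -/
def affLat (n : ℕ) (α : Fin n → ℝ) (g : SLR n) : Set (Fin n → ℝ) :=
  {x | ∃ v : Fin n → ℤ, x = Matrix.vecMul (fun i => (v i : ℝ) + α i) ((g : SLR n) : Matrix (Fin n) (Fin n) ℝ)}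

/-- The number of points of `Λ` in `A`, valued in `ℝ≥0∞`. -/
def latCount (n : ℕ) (Λ A : Set (Fin n → ℝ)) : ℝ≥0∞ := ∑' _ : ↥(Λ ∩ A), (1 : ℝ≥0∞)

/-- The discrepancy `D(Λ,A) = |#(Λ∩A) − vol(A)|`, valued in `ℝ≥0∞`. -/
def disc (n : ℕ) (Λ A : Set (Fin n → ℝ)) : ℝ≥0∞ :=
  (latCount n Λ A - volume A) + (volume A - latCount n Λ A)

/-- `⟨α⟩`: the sup-norm distance from `α` to `ℤⁿ`. -/
def distZ (n : ℕ) (α : Fin n → ℝ) : ℝ := ⨅ v : Fin n → ℤ, ‖α - fun i => (v i : ℝ)‖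

/-- `m` is a best simultaneous Diophantine approximation denominator of `α`. -/
def IsBestDenom (n : ℕ) (α : Fin n → ℝ) (m : ℕ) : Prop :=
  0 < m ∧ ∀ l : ℕ, 1 ≤ l → l < m →
    distZ n (fun i => (m : ℝ) * α i) < distZ n (fun i => (l : ℝ) * α i)

/-- The defining set of the Diophantine exponent `ω_α`. -/
def omegaSet (n : ℕ) (α : Fin n → ℝ) : Set ℝ :=
  {ν | 0 < ν ∧ ∀ T : ℝ, ∃ t : ℝ, T < t ∧ ∃ m : ℤ, m ≠ 0 ∧ |(m : ℝ)| < t ∧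
    distZ n (fun i => (m : ℝ) * α i) < t ^ (-ν)}

/-- The defining set of the uniform Diophantine exponent `ω̂_α`. -/
def omegaHatSet (n : ℕ) (α : Fin n → ℝ) : Set ℝ :=
  {ν | 0 < ν ∧ ∃ T : ℝ, ∀ t : ℝ, T ≤ t → ∃ m : ℤ, m ≠ 0 ∧ |(m : ℝ)| < t ∧
    distZ n (fun i => (m : ℝ) * α i) < t ^ (-ν)}

/-- The Diophantine exponent `ω_α`. -/
def dioExp (n : ℕ) (α : Fin n → ℝ) : ℝ := sSup (omegaSet n α)

/-- The uniform Diophantine exponent `ω̂_α`. -/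
def dioExpHat (n : ℕ) (α : Fin n → ℝ) : ℝ := sSup (omegaHatSet n α)

/-- `α ∈ ℝⁿ` is an irrational vector, i.e. `α ∉ ℚⁿ`. -/
def IsIrrationalVec (n : ℕ) (α : Fin n → ℝ) : Prop := ∀ v : Fin n → ℚ, α ≠ fun i => (v i : ℝ)

/-- The open Euclidean ball `B_t` of radius `t` centered at the origin. -/
def ball0 (n : ℕ) (t : ℝ) : Set (Fin n → ℝ) := {v | eNorm n v < t}

/-!
If `(ℤⁿ + α)·g = ℤⁿ + α`, every row `e_j·g = (e_j + α)·g - α·g` is a difference of two points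
of `ℤⁿ + α`, hence integral, so `g = γ ∈ SL_n(ℤ)`; for integral `γ` the equality holds exactly when
`α·γ ≡ α (mod ℤⁿ)`, since this congruence passes to `γ⁻¹`. For `α = p/q` the congruence reads
`p·γ ≡ p (mod q)`, and as `p ≡ r·e_n·γ_p` with `r` a unit mod `q`, it says
`e_n·(γ_p γ γ_p⁻¹) ≡ e_n (mod q)`. The description of `Y_{p/q}` is then orbit–stabilizer for the
right action `Λ ↦ Λ·g`.
-/

theorem Matrix.SpecialLinearGroup.vecMul_injective {ι R : Type*} [Fintype ι] [DecidableEq ι]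
    [CommRing R] (A : Matrix.SpecialLinearGroup ι R) :
    Function.Injective fun x : ι → R => x ᵥ* (A : Matrix ι ι R) :=
  vecMul_injective_of_isUnit ((isUnit_iff_isUnit_det _).2 (by rw [A.2]; exact isUnit_one))

theorem Matrix.SpecialLinearGroup.smul_vecMul_vecMul_eq_self_iff {ι R : Type*} [Fintype ι]
    [DecidableEq ι] [CommRing R] {r : R} (hr : IsUnit r) (u : ι → R)
    (P M : Matrix.SpecialLinearGroup ι R) :
    (r • (u ᵥ* (P : Matrix ι ι R))) ᵥ* (M : Matrix ι ι R) = r • (u ᵥ* (P : Matrix ι ι R)) ↔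
      u ᵥ* ((P * M * P⁻¹ : Matrix.SpecialLinearGroup ι R) : Matrix ι ι R) = u := by
  rw [smul_vecMul, hr.smul_left_cancel, ← (vecMul_injective P⁻¹).eq_iff]
  simp only [vecMul_vecMul, ← Matrix.SpecialLinearGroup.coe_mul, mul_inv_cancel,
    Matrix.SpecialLinearGroup.coe_one, vecMul_one]

theorem exists_injective_quotient_rightRel {G X : Type*} [Group G] (H : Subgroup G) (f : G → X)
    (hf : ∀ a b, f a = f b ↔ a * b⁻¹ ∈ H) :
    ∃ Φ : Quotient (QuotientGroup.rightRel H) → X,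
      Function.Injective Φ ∧ Set.range Φ = Set.range f ∧ ∀ g, Φ (Quotient.mk _ g) = f g := by
  refine ⟨Quotient.lift f fun a b hab => ?_, fun c₁ c₂ => ?_, ?_, fun _ => rfl⟩
  · rw [hf, ← inv_mem_iff, _root_.mul_inv_rev, inv_inv]
    exact QuotientGroup.rightRel_apply.mp hab
  · induction c₁ using Quotient.inductionOn
    induction c₂ using Quotient.inductionOn
    intro h
    exact Quotient.sound (s := QuotientGroup.rightRel H)
      (QuotientGroup.rightRel_apply.mpr ((hf _ _).mp h.symm))
  · exact Set.range_quotient_lift (s := QuotientGroup.rightRel H) _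

theorem mul_mul_inv_mem_map_iff {G K : Type*} [Group G] [Group K] (f : G →* K) (H : Subgroup G)
    (a : G) (k : K) : f a * k * (f a)⁻¹ ∈ H.map f ↔ ∃ g, f g = k ∧ a * g * a⁻¹ ∈ H := by
  constructor
  · rintro ⟨δ, hδ, hfδ⟩
    refine ⟨a⁻¹ * δ * a, ?_, by group; exact hδ⟩
    simp only [map_mul, map_inv, hfδ]
    group
  · rintro ⟨g, rfl, hg⟩
    exact ⟨_, hg, by simp only [map_mul, map_inv]⟩

theorem exists_div_eq_intCast_add_div_iff {q : ℕ} (hq : q ≠ 0) (a b : ℤ) :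
    (∃ w : ℤ, (a : ℝ) / q = w + b / q) ↔ (q : ℤ) ∣ b - a := by
  have hq' : (q : ℝ) ≠ 0 := Nat.cast_ne_zero.2 hq
  constructor
  · rintro ⟨w, hw⟩
    refine ⟨-w, ?_⟩
    field_simp at hw
    exact_mod_cast (by linarith : (b : ℝ) - a = q * -w)
  · rintro ⟨c, hc⟩
    refine ⟨-c, ?_⟩
    have hc' : (b : ℝ) - a = q * c := by exact_mod_cast hc
    field_simp
    push_cast
    linarith

section

variable {n : ℕ}

theorem intCast_vecMul_ιR (v : Fin n → ℤ) (γ : SLZ n) :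
    (fun i => ((v ᵥ* (γ : Matrix (Fin n) (Fin n) ℤ)) i : ℝ)) =
      (fun i => (v i : ℝ)) ᵥ* ((ιR n γ : SLR n) : Matrix (Fin n) (Fin n) ℝ) :=
  funext fun i => RingHom.map_vecMul (Int.castRingHom ℝ) _ v i

theorem intCast_vecMul_ιM {q : ℕ} (v : Fin n → ℤ) (γ : SLZ n) :
    (fun i => ((v ᵥ* (γ : Matrix (Fin n) (Fin n) ℤ)) i : ZMod q)) =
      (fun i => (v i : ZMod q)) ᵥ* ((ιM n q γ : Matrix.SpecialLinearGroup (Fin n) (ZMod q)) :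
        Matrix (Fin n) (Fin n) (ZMod q)) :=
  funext fun i => RingHom.map_vecMul (Int.castRingHom (ZMod q)) _ v i

theorem exists_ιR_eq_of_forall_intCast (g : SLR n)
    (hg : ∀ i j, ∃ z : ℤ, (z : ℝ) = (g : Matrix (Fin n) (Fin n) ℝ) i j) :
    ∃ γ : SLZ n, ιR n γ = g := by
  choose B hB using hg
  have hgB : (g : Matrix (Fin n) (Fin n) ℝ) = (Matrix.of B).map (↑) := by
    ext i j; exact (hB i j).symm
  have hdet : ((Matrix.of B).det : ℝ) = 1 := by
    rw [← g.2, hgB]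
    exact RingHom.map_det (Int.castRingHom ℝ) _
  exact ⟨⟨Matrix.of B, by exact_mod_cast hdet⟩, Subtype.ext hgB.symm⟩

theorem mem_Gamma1_iff {q : ℕ} {γ : SLZ n} :
    γ ∈ Gamma1 n q ↔
      enM n q ᵥ* ((ιM n q γ : Matrix.SpecialLinearGroup (Fin n) (ZMod q)) :
        Matrix (Fin n) (Fin n) (ZMod q)) = enM n q :=
  Iff.rfl

theorem mem_affLat {α x : Fin n → ℝ} {g : SLR n} :
    x ∈ affLat n α g ↔
      ∃ v : Fin n → ℤ, x = (fun i => (v i : ℝ) + α i) ᵥ* (g : Matrix (Fin n) (Fin n) ℝ) :=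
  Iff.rfl

theorem mem_affLat_one {α x : Fin n → ℝ} :
    x ∈ affLat n α 1 ↔ ∃ v : Fin n → ℤ, x = fun i => (v i : ℝ) + α i := by
  simp only [mem_affLat, Matrix.SpecialLinearGroup.coe_one, vecMul_one]

theorem affLat_one (α : Fin n → ℝ) :
    affLat n α 1 = {x | ∃ v : Fin n → ℤ, x = fun i => (v i : ℝ) + α i} :=
  Set.ext fun _ => mem_affLat_one

theorem affLat_mul (α : Fin n → ℝ) (a b : SLR n) :
    affLat n α (a * b) = (· ᵥ* (b : Matrix (Fin n) (Fin n) ℝ)) '' affLat n α a := by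
  ext x
  simp only [mem_affLat, Set.mem_image, Matrix.SpecialLinearGroup.coe_mul,
    ← vecMul_vecMul]
  constructor
  · rintro ⟨v, rfl⟩
    exact ⟨_, ⟨v, rfl⟩, rfl⟩
  · rintro ⟨_, ⟨v, rfl⟩, rfl⟩
    exact ⟨v, rfl⟩

theorem affLat_eq_affLat_iff (α : Fin n → ℝ) (a b : SLR n) :
    affLat n α a = affLat n α b ↔ affLat n α (a * b⁻¹) = affLat n α 1 := by
  have ha : affLat n α a = (· ᵥ* (b : Matrix (Fin n) (Fin n) ℝ)) '' affLat n α (a * b⁻¹) := by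
    rw [← affLat_mul, inv_mul_cancel_right]
  have hb : affLat n α b = (· ᵥ* (b : Matrix (Fin n) (Fin n) ℝ)) '' affLat n α 1 := by
    rw [← affLat_mul, one_mul]
  rw [ha, hb, (Set.image_injective.2 (Matrix.SpecialLinearGroup.vecMul_injective b)).eq_iff]

theorem exists_ιR_eq_of_affLat_subset {α : Fin n → ℝ} {g : SLR n}
    (h : affLat n α g ⊆ affLat n α 1) : ∃ γ : SLZ n, ιR n γ = g := by
  have hpt : ∀ v : Fin n → ℤ, ∃ w : Fin n → ℤ,
      (fun i => (v i : ℝ) + α i) ᵥ* (g : Matrix (Fin n) (Fin n) ℝ) = fun i => (w i : ℝ) + α i :=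
    fun v => mem_affLat_one.1 (h (mem_affLat.2 ⟨v, rfl⟩))
  choose F hF using hpt
  refine exists_ιR_eq_of_forall_intCast g fun j i => ⟨F (Pi.single j 1) i - F 0 i, ?_⟩
  set G := (g : Matrix (Fin n) (Fin n) ℝ)
  -- row `j` of `g` is `(e_j + α)·g - α·g`
  have hsplit : ∀ v : Fin n → ℤ,
      (fun i => (v i : ℝ) + α i) ᵥ* G = (fun i => (v i : ℝ)) ᵥ* G + α ᵥ* G :=
    fun v => add_vecMul _ _ _
  have hj : (fun k => ((Pi.single j 1 : Fin n → ℤ) k : ℝ)) = Pi.single j 1 := by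
    ext k
    simp [Pi.single_apply]
  have h0 : (fun k => ((0 : Fin n → ℤ) k : ℝ)) = 0 := by
    ext k
    simp
  have hrow := congrFun (hF (Pi.single j 1)) i
  have hzero := congrFun (hF 0) i
  rw [hsplit, hj, single_one_vecMul] at hrow
  rw [hsplit, h0, zero_vecMul] at hzero
  simp only [Pi.add_apply, Pi.zero_apply, row_apply] at hrow hzero
  push_cast
  linarith

theorem affLat_ιR_subset_iff (α : Fin n → ℝ) (γ : SLZ n) :
    affLat n α (ιR n γ) ⊆ affLat n α 1 ↔
      α ᵥ* ((ιR n γ : SLR n) : Matrix (Fin n) (Fin n) ℝ) ∈ affLat n α 1 := by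
  refine ⟨fun h => h (mem_affLat.2 ⟨0, by simp⟩), fun hα x hx => ?_⟩
  obtain ⟨w, hw⟩ := mem_affLat_one.1 hα
  obtain ⟨v, rfl⟩ := mem_affLat.1 hx
  refine mem_affLat_one.2 ⟨v ᵥ* (γ : Matrix (Fin n) (Fin n) ℤ) + w, ?_⟩
  rw [show (fun i => (v i : ℝ) + α i) = (fun i => (v i : ℝ)) + α from rfl, add_vecMul, hw,
    ← intCast_vecMul_ιR]
  funext i
  simp only [Pi.add_apply, Int.cast_add]
  ring

theorem vecMul_ιR_inv_mem_affLat_one {α : Fin n → ℝ} {γ : SLZ n}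
    (h : α ᵥ* ((ιR n γ : SLR n) : Matrix (Fin n) (Fin n) ℝ) ∈ affLat n α 1) :
    α ᵥ* ((ιR n γ⁻¹ : SLR n) : Matrix (Fin n) (Fin n) ℝ) ∈ affLat n α 1 := by
  obtain ⟨w, hw⟩ := mem_affLat_one.1 h
  refine mem_affLat_one.2 ⟨-(w ᵥ* ((γ⁻¹ : SLZ n) : Matrix (Fin n) (Fin n) ℤ)), ?_⟩
  have hα : α = (fun i => ((w ᵥ* ((γ⁻¹ : SLZ n) : Matrix (Fin n) (Fin n) ℤ)) i : ℝ)) +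
      α ᵥ* ((ιR n γ⁻¹ : SLR n) : Matrix (Fin n) (Fin n) ℝ) := by
    have := congrArg (· ᵥ* ((ιR n γ⁻¹ : SLR n) : Matrix (Fin n) (Fin n) ℝ)) hw
    simp only [vecMul_vecMul, ← Matrix.SpecialLinearGroup.coe_mul, ← map_mul, mul_inv_cancel,
      map_one, Matrix.SpecialLinearGroup.coe_one, vecMul_one] at this
    conv_lhs => rw [this]
    rw [intCast_vecMul_ιR, ← add_vecMul]
    rfl
  funext i
  have := congrFun hα i
  simp only [Pi.add_apply] at this
  simp only [Pi.neg_apply, Int.cast_neg]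
  linarith

theorem affLat_eq_affLat_one_iff (α : Fin n → ℝ) (g : SLR n) :
    affLat n α g = affLat n α 1 ↔
      ∃ γ : SLZ n, ιR n γ = g ∧
        α ᵥ* ((ιR n γ : SLR n) : Matrix (Fin n) (Fin n) ℝ) ∈ affLat n α 1 := by
  constructor
  · intro h
    obtain ⟨γ, rfl⟩ := exists_ιR_eq_of_affLat_subset h.subset
    exact ⟨γ, rfl, (affLat_ιR_subset_iff α γ).1 h.subset⟩
  · rintro ⟨γ, rfl, hγ⟩
    refine ((affLat_ιR_subset_iff α γ).2 hγ).antisymm ?_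
    have hinv := (affLat_ιR_subset_iff α γ⁻¹).2 (vecMul_ιR_inv_mem_affLat_one hγ)
    calc affLat n α 1
        = (· ᵥ* ((ιR n γ : SLR n) : Matrix (Fin n) (Fin n) ℝ)) '' affLat n α (ιR n γ⁻¹) := by
          rw [← affLat_mul, ← map_mul, inv_mul_cancel, map_one]
      _ ⊆ (· ᵥ* ((ιR n γ : SLR n) : Matrix (Fin n) (Fin n) ℝ)) '' affLat n α 1 :=
          Set.image_mono hinv
      _ = affLat n α (ιR n γ) := by rw [← affLat_mul, one_mul]

theorem vecMul_ιR_mem_affLat_one_iff {q : ℕ} (hq : q ≠ 0) (p : Fin n → ℤ) (γ : SLZ n) :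
    (fun i => (p i : ℝ) / q) ᵥ* ((ιR n γ : SLR n) : Matrix (Fin n) (Fin n) ℝ) ∈
        affLat n (fun i => (p i : ℝ) / q) 1 ↔
      (fun i => (p i : ZMod q)) ᵥ*
          ((ιM n q γ : Matrix.SpecialLinearGroup (Fin n) (ZMod q)) :
            Matrix (Fin n) (Fin n) (ZMod q)) = fun i => (p i : ZMod q) := by
  have hdiv : (fun i => (p i : ℝ) / q) ᵥ* ((ιR n γ : SLR n) : Matrix (Fin n) (Fin n) ℝ) =
      fun i => ((p ᵥ* (γ : Matrix (Fin n) (Fin n) ℤ)) i : ℝ) / q := by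
    rw [show (fun i => (p i : ℝ) / q) = (q : ℝ)⁻¹ • fun i => (p i : ℝ) by
        ext; simp [div_eq_inv_mul],
      smul_vecMul, ← intCast_vecMul_ιR]
    ext
    simp [div_eq_inv_mul]
  rw [mem_affLat_one, hdiv, ← intCast_vecMul_ιM]
  simp only [funext_iff, ZMod.intCast_eq_intCast_iff_dvd_sub,
    ← exists_div_eq_intCast_add_div_iff hq]
  exact ⟨fun ⟨v, hv⟩ i => ⟨v i, hv i⟩, fun h => Classical.skolem.1 h⟩

end

theorem statement11_general (n : ℕ) (p : Fin n → ℤ) (q : ℕ) (hq : 0 < q)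
    (hpq : Int.gcd (Finset.univ.gcd p) (q : ℤ) = 1)
    (r : ℤ) (hr : r = Finset.univ.gcd p) (γp : SLZ n)
    (hγp : p = Matrix.vecMul (r • en n) ((γp : SLZ n) : Matrix (Fin n) (Fin n) ℤ)) :
    (∀ g : SLR n,
      affLat n (fun i => (p i : ℝ) / (q : ℝ)) g =
          {x : Fin n → ℝ | ∃ v : Fin n → ℤ, x = fun i => (v i : ℝ) + (p i : ℝ) / (q : ℝ)} ↔
        ιR n γp * g * (ιR n γp)⁻¹ ∈ (Gamma1 n q).map (ιR n)) ∧
    (∃ Φ : Quotient (QuotientGroup.rightRel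
        (((Gamma1 n q).map (ιR n)).comap (MulAut.conj (ιR n γp)).toMonoidHom)) →
          Set (Fin n → ℝ),
      Function.Injective Φ ∧
      Set.range Φ = {Λ : Set (Fin n → ℝ) | ∃ g : SLR n,
        Λ = affLat n (fun i => (p i : ℝ) / (q : ℝ)) g} ∧
      ∀ g : SLR n,
        Φ (Quotient.mk (QuotientGroup.rightRel
            (((Gamma1 n q).map (ιR n)).comap (MulAut.conj (ιR n γp)).toMonoidHom)) g) =
          affLat n (fun i => (p i : ℝ) / (q : ℝ)) g) := by
  have hr_unit : IsUnit (r : ZMod q) :=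
    (ZMod.coe_int_isUnit_iff_isCoprime r q).2
      (isCoprime_comm.1 (Int.isCoprime_iff_gcd_eq_one.2 (hr ▸ hpq)))
  have hp_mod : (fun i => (p i : ZMod q)) = (r : ZMod q) • (enM n q ᵥ*
      ((ιM n q γp : Matrix.SpecialLinearGroup (Fin n) (ZMod q)) :
        Matrix (Fin n) (Fin n) (ZMod q))) := by
    have hen : (fun i => ((r • en n) i : ZMod q)) = (r : ZMod q) • enM n q := by
      ext i
      by_cases hi : (i : ℕ) = n - 1 <;> simp [en, enM, hi]
    rw [hγp, intCast_vecMul_ιM, hen, smul_vecMul]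
  have hstab : ∀ g : SLR n,
      affLat n (fun i => (p i : ℝ) / q) g = affLat n (fun i => (p i : ℝ) / q) 1 ↔
        ιR n γp * g * (ιR n γp)⁻¹ ∈ (Gamma1 n q).map (ιR n) := by
    intro g
    rw [affLat_eq_affLat_one_iff, mul_mul_inv_mem_map_iff]
    refine exists_congr fun γ => and_congr_right fun _ => ?_
    rw [vecMul_ιR_mem_affLat_one_iff hq.ne', hp_mod,
      Matrix.SpecialLinearGroup.smul_vecMul_vecMul_eq_self_iff hr_unit, mem_Gamma1_iff, map_mul,
      map_mul, map_inv]
  refine ⟨fun g => affLat_one (n := n) _ ▸ hstab g, ?_⟩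
  refine (exists_injective_quotient_rightRel _ (affLat n _) fun a b => ?_).imp
    fun Φ ⟨hinj, hrange, hmk⟩ =>
      ⟨hinj, hrange.trans (Set.ext fun _ => exists_congr fun _ => eq_comm), hmk⟩
  exact (affLat_eq_affLat_iff _ a b).trans (hstab (a * b⁻¹))

/-- Lemma 3.1 of the paper: the stabilizer of the affine lattice
`ℤⁿ + p/q` in `SL_n(ℝ)` is `γ_p⁻¹·Γ₁ⁿ(q)·γ_p`, and `Y_{p/q}` is identified with the
homogeneous space `γ_p⁻¹Γ₁ⁿ(q)γ_p\SL_n(ℝ)`. -/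
theorem statement11 (n : ℕ) (hn : 2 ≤ n) (p : Fin n → ℤ) (q : ℕ) (hq : 0 < q)
    (hpq : Int.gcd (Finset.univ.gcd p) (q : ℤ) = 1)
    (r : ℤ) (hr : r = Finset.univ.gcd p) (γp : SLZ n)
    (hγp : p = Matrix.vecMul (r • en n) ((γp : SLZ n) : Matrix (Fin n) (Fin n) ℤ)) :
    (∀ g : SLR n,
      affLat n (fun i => (p i : ℝ) / (q : ℝ)) g =
          {x : Fin n → ℝ | ∃ v : Fin n → ℤ, x = fun i => (v i : ℝ) + (p i : ℝ) / (q : ℝ)} ↔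
        ιR n γp * g * (ιR n γp)⁻¹ ∈ (Gamma1 n q).map (ιR n)) ∧
    (∃ Φ : Quotient (QuotientGroup.rightRel
        (((Gamma1 n q).map (ιR n)).comap (MulAut.conj (ιR n γp)).toMonoidHom)) →
          Set (Fin n → ℝ),
      Function.Injective Φ ∧
      Set.range Φ = {Λ : Set (Fin n → ℝ) | ∃ g : SLR n,
        Λ = affLat n (fun i => (p i : ℝ) / (q : ℝ)) g} ∧
      ∀ g : SLR n,
        Φ (Quotient.mk (QuotientGroup.rightRel
            (((Gamma1 n q).map (ιR n)).comap (MulAut.conj (ιR n γp)).toMonoidHom)) g) =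
          affLat n (fun i => (p i : ℝ) / (q : ℝ)) g) :=
  statement11_general n p q hq hpq r hr γp hγp
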